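/- arXiv:1902.10026 — 6 statements merged into one kernel-verified Lean document; each statement's English description precedes it below -/
import Mathlib

section
/- Let C be a unital C*-algebra and I a set. Let A = (A_i)_{i∈I} be a bounded family in C, viewed as an element of the C*-algebra of bounded functions I → C. If the set {A_i : i ∈ I} is compact in C, then the spectrum of A equals the union over i ∈ I of the spectra of the A_i. -/
/-- Evaluation at a point as an algebra homomorphism. -/
def evalAlgHomBCF {C : Type*} [NormedRing C] [NormedAlgebra ℂ C]
    {I : Type*} [TopologicalSpace I] (i : I) :
    BoundedContinuousFunction I C →ₐ[ℂ] C where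
  toFun f := f i
  map_one' := rfl
  map_mul' _ _ := rfl
  map_zero' := rfl
  map_add' _ _ := rfl
  commutes' _ := rfl

/-- Let `C` be a unital C*-algebra and `I` a set (a discrete space).  Let
`A = (A_i)_{i∈I}` be a bounded family in `C`, viewed as an element of the C*-algebra of
bounded functions `I → C`.  If the set `{A_i : i ∈ I}` is compact in `C`, then the
spectrum of `A` equals the union over `i ∈ I` of the spectra of the `A_i`. -/
theorem spectrum_boundedContinuousFunction_eq_iUnion
    {C : Type*} [NormedRing C] [StarRing C] [CStarRing C]
    [NormedAlgebra ℂ C] [CompleteSpace C]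
    {I : Type*} [TopologicalSpace I] [DiscreteTopology I]
    (A : BoundedContinuousFunction I C)
    (hcompact : IsCompact (Set.range (⇑A : I → C))) :
    spectrum ℂ A = ⋃ i : I, spectrum ℂ (A i) := by
  ext c
  simp only [Set.mem_iUnion]
  constructor
  · intro hc
    by_contra hall
    push_neg at hall
    have h : ∀ i, IsUnit (algebraMap ℂ C c - A i) := fun i => by
      have := hall i; rwa [spectrum.notMem_iff] at this
    -- compactness gives continuity + boundedness of the pointwise inverses
    have hcont : ContinuousOn (fun x => Ring.inverse (algebraMap ℂ C c - x))
        (Set.range (⇑A : I → C)) := by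
      rintro x ⟨i, rfl⟩
      have h1 : ContinuousAt Ring.inverse (algebraMap ℂ C c - A i) := by
        have := NormedRing.inverse_continuousAt (h i).unit
        rwa [(h i).unit_spec] at this
      exact (h1.comp (continuous_const.sub continuous_id).continuousAt).continuousWithinAt
    obtain ⟨M, hM⟩ := isBounded_iff_forall_norm_le.mp
      (hcompact.image_of_continuousOn hcont).isBounded
    set g : I → C := fun i => Ring.inverse (algebraMap ℂ C c - A i) with hg
    have hgM : ∀ i, ‖g i‖ ≤ M := fun i =>
      hM _ ⟨A i, ⟨i, rfl⟩, rfl⟩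
    let B : BoundedContinuousFunction I C :=
      BoundedContinuousFunction.ofNormedAddCommGroup g (continuous_of_discreteTopology) M hgM
    have hB : IsUnit (algebraMap ℂ (BoundedContinuousFunction I C) c - A) := by
      rw [isUnit_iff_exists]
      refine ⟨B, ?_, ?_⟩ <;> ext i
      · exact Ring.mul_inverse_cancel _ (h i)
      · exact Ring.inverse_mul_cancel _ (h i)
    rw [spectrum.mem_iff] at hc
    exact hc hB
  · rintro ⟨i, hi⟩
    exact AlgHom.spectrum_apply_subset (evalAlgHomBCF i) A hi
end

section
/- Let C be a unital C*-algebra, I a set, and A = (A_i)_{i∈I} a bounded family in C such that each A_i is normal. Then the spectrum of A in the C*-algebra of bounded functions I → C equals the closure of the union of the spectra Sp(A_i). -/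
/-!
Evaluation at `i` is a unital algebra homomorphism, so `Sp(A i) ⊆ Sp(A)`, and spectra are closed.
Conversely, if `z` has distance at least `ε > 0` from every `Sp(A i)`, each `z - A i` is
invertible, and since the inverse of a normal element is normal and normal elements have spectral
radius equal to their norm, `‖(z - A i)⁻¹‖ ≤ ε⁻¹`. Inversion is continuous on the units of a
Banach algebra, so these inverses form a bounded continuous function inverting `z - A`.
The spectral radius of a normal `a` is computed by Gelfand's formula along the subsequence
`2 ^ n`, where the C⋆-identity gives `‖a ^ 2 ^ n‖ = ‖a‖ ^ 2 ^ n`.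
-/

open scoped ENNReal BoundedContinuousFunction

instance IsStarNormal.pow {M : Type*} [Monoid M] [StarMul M] (a : M) [IsStarNormal a] (n : ℕ) :
    IsStarNormal (a ^ n) :=
  ⟨by simpa only [star_pow] using (star_comm_self (x := a)).pow_pow n n⟩

/-- There is no `StarModule`, so `star (algebraMap 𝕜 A r)` is only known to be central. -/
theorem isStarNormal_algebraMap_sub {𝕜 A : Type*} [CommSemiring 𝕜] [Ring A] [StarRing A]
    [Algebra 𝕜 A] (r : 𝕜) (a : A) [IsStarNormal a] : IsStarNormal (algebraMap 𝕜 A r - a) := by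
  have hc : ∀ x : A, Commute (algebraMap 𝕜 A r) x := Algebra.commutes r
  have hsc : ∀ x : A, Commute (star (algebraMap 𝕜 A r)) x := fun x => by
    simpa using (hc (star x)).star_star
  exact ⟨by rw [star_sub]; exact (hsc _).sub_left ((hc _).symm.sub_right star_comm_self)⟩

section CStarRing

variable {A : Type*} [NormedRing A] [StarRing A] [CStarRing A]

theorem IsStarNormal.nnnorm_sq (a : A) [IsStarNormal a] : ‖a ^ 2‖₊ = ‖a‖₊ ^ 2 := by
  have hsa : IsSelfAdjoint (star a * a) := .star_mul_self a
  refine (pow_left_inj₀ (zero_le) (zero_le) two_ne_zero).1 ?_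
  calc ‖a ^ 2‖₊ ^ 2 = ‖star (a ^ 2) * a ^ 2‖₊ := by rw [CStarRing.nnnorm_star_mul_self, sq]
    _ = ‖star (star a * a) * (star a * a)‖₊ := by
      rw [hsa.star_eq, star_pow, sq, sq, star_comm_self.mul_mul_mul_comm]
    _ = (‖a‖₊ ^ 2) ^ 2 := by
      rw [CStarRing.nnnorm_star_mul_self, CStarRing.nnnorm_star_mul_self]
      ring

theorem IsStarNormal.nnnorm_pow_two_pow (a : A) [IsStarNormal a] (n : ℕ) :
    ‖a ^ 2 ^ n‖₊ = ‖a‖₊ ^ 2 ^ n := by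
  induction n with
  | zero => simp
  | succ n ih => rw [pow_succ, pow_mul, IsStarNormal.nnnorm_sq, ih, ← pow_mul]

end CStarRing

theorem spectrum.spectralRadius_eq_nnnorm_of_nnnorm_pow_two_pow {A : Type*} [NormedRing A]
    [NormedAlgebra ℂ A] [CompleteSpace A] {a : A} (h : ∀ n, ‖a ^ 2 ^ n‖₊ = ‖a‖₊ ^ 2 ^ n) :
    spectralRadius ℂ a = ‖a‖₊ := by
  refine tendsto_nhds_unique ((pow_nnnorm_pow_one_div_tendsto_nhds_spectralRadius a).comp
    (tendsto_pow_atTop_atTop_of_one_lt one_lt_two)) (tendsto_const_nhds.congr fun n => ?_)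
  rw [Function.comp_apply, h, ENNReal.coe_pow, ← ENNReal.rpow_natCast, ← ENNReal.rpow_mul,
    mul_one_div_cancel (by positivity), ENNReal.rpow_one]

section CStarAlgebra

variable {A : Type*} [NormedRing A] [StarRing A] [CStarRing A] [NormedAlgebra ℂ A]
  [CompleteSpace A]

/-- Mathlib's `IsStarNormal.spectralRadius_eq_nnnorm` assumes `CStarAlgebra A`, which includes
`StarModule ℂ A`. -/
theorem CStarRing.spectralRadius_eq_nnnorm_of_isStarNormal (a : A) [IsStarNormal a] :
    spectralRadius ℂ a = ‖a‖₊ :=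
  spectrum.spectralRadius_eq_nnnorm_of_nnnorm_pow_two_pow (IsStarNormal.nnnorm_pow_two_pow a)

theorem CStarRing.norm_resolvent_le_of_forall_le_dist {a : A} [IsStarNormal a] {z : ℂ} {ε : ℝ}
    (hε : 0 < ε) (h : ∀ μ ∈ spectrum ℂ a, ε ≤ dist z μ) : ‖resolvent a z‖ ≤ ε⁻¹ := by
  have hz : z ∉ spectrum ℂ a := fun hz => (h z hz).not_gt (by simpa using hε)
  obtain ⟨u, hu⟩ := spectrum.notMem_iff.1 hz
  have : IsStarNormal (u : A) := hu ▸ isStarNormal_algebraMap_sub z a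
  have h_norm_inv : (‖(↑u⁻¹ : A)‖₊ : ℝ≥0∞) ≤ ENNReal.ofReal ε⁻¹ := by
    rw [← spectralRadius_eq_nnnorm_of_isStarNormal]
    refine iSup₂_le fun μ hμ => ?_
    rw [← spectrum.map_inv, Set.mem_inv, hu, ← spectrum.singleton_sub_eq] at hμ
    obtain ⟨_, rfl, ν, hν, hμν⟩ := hμ
    rw [← ENNReal.ofReal_coe_nnreal, coe_nnnorm, ← inv_inv μ, norm_inv, ← hμν, ← dist_eq_norm]
    exact ENNReal.ofReal_le_ofReal (inv_anti₀ hε (h ν hν))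
  rw [resolvent, ← hu, Ring.inverse_unit]
  rwa [← ENNReal.ofReal_coe_nnreal, coe_nnnorm,
    ENNReal.ofReal_le_ofReal_iff (by positivity)] at h_norm_inv

end CStarAlgebra

namespace BoundedContinuousFunction

variable {α R : Type*} [TopologicalSpace α]

theorem spectrum_apply_subset {𝕜 : Type*} [NormedField 𝕜] [NormedRing R] [NormedAlgebra 𝕜 R]
    (f : α →ᵇ R) (x : α) : spectrum 𝕜 (f x) ⊆ spectrum 𝕜 f := fun z hz hu => hz <| by
  simpa [spectrum.mem_resolventSet_iff, Algebra.algebraMap_eq_smul_one] using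
    hu.map ((Pi.evalMonoidHom _ x).comp coeFnMonoidHom)

theorem isUnit_of_forall_isUnit_of_norm_inverse_le [NormedRing R] [CompleteSpace R] {f : α →ᵇ R}
    (hf : ∀ x, IsUnit (f x)) {M : ℝ} (hM : ∀ x, ‖Ring.inverse (f x)‖ ≤ M) : IsUnit f := by
  have hcont : Continuous fun x => Ring.inverse (f x) := continuous_iff_continuousAt.2 fun x =>
    (NormedRing.inverse_continuousAt (hf x).unit).comp_of_eq f.continuous.continuousAt
      (hf x).unit_spec.symm
  refine isUnit_iff_exists.2 ⟨ofNormedAddCommGroup _ hcont M hM, ?_, ?_⟩ <;> ext x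
  · exact Ring.mul_inverse_cancel _ (hf x)
  · exact Ring.inverse_mul_cancel _ (hf x)

end BoundedContinuousFunction

theorem spectrum_boundedContinuousFunction_eq_closure_iUnion_of_normal_general
    {C : Type*} [NormedRing C] [StarRing C] [CStarRing C]
    [NormedAlgebra ℂ C] [CompleteSpace C]
    {I : Type*} [TopologicalSpace I]
    (A : BoundedContinuousFunction I C)
    (hnormal : ∀ i : I, IsStarNormal (A i)) :
    spectrum ℂ A = closure (⋃ i : I, spectrum ℂ (A i)) := by
  refine subset_antisymm (fun z hz => ?_) (closure_minimal
    (Set.iUnion_subset A.spectrum_apply_subset) (spectrum.isClosed A))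
  by_contra hz_closure
  obtain ⟨ε, hε, hε_dist⟩ : ∃ ε > 0, ∀ μ ∈ ⋃ i, spectrum ℂ (A i), ε ≤ dist z μ := by
    simpa [Metric.mem_closure_iff] using hz_closure
  have h_dist (i : I) : ∀ μ ∈ spectrum ℂ (A i), ε ≤ dist z μ :=
    fun μ hμ => hε_dist μ (Set.mem_iUnion_of_mem i hμ)
  have h_apply (i : I) : (algebraMap ℂ (I →ᵇ C) z - A) i = algebraMap ℂ C z - A i := by
    simp [Algebra.algebraMap_eq_smul_one]
  refine hz (BoundedContinuousFunction.isUnit_of_forall_isUnit_of_norm_inverse_le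
    (fun i => ?_) (M := ε⁻¹) fun i => ?_) <;> rw [h_apply]
  · exact spectrum.notMem_iff.1 fun hzi => (h_dist i z hzi).not_gt (by simpa using hε)
  · have := hnormal i
    exact CStarRing.norm_resolvent_le_of_forall_le_dist hε (h_dist i)

/-- Let `C` be a unital C*-algebra, `I` a set (a discrete space), and
`A = (A_i)_{i∈I}` a bounded family in `C` (an element of the C*-algebra of bounded
functions `I → C`) such that each `A_i` is normal.  Then the spectrum of `A` equals the
closure of the union of the spectra `Sp(A_i)`. -/
theorem spectrum_boundedContinuousFunction_eq_closure_iUnion_of_normal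
    {C : Type*} [NormedRing C] [StarRing C] [CStarRing C]
    [NormedAlgebra ℂ C] [CompleteSpace C]
    {I : Type*} [TopologicalSpace I] [DiscreteTopology I]
    (A : BoundedContinuousFunction I C)
    (hnormal : ∀ i : I, IsStarNormal (A i)) :
    spectrum ℂ A = closure (⋃ i : I, spectrum ℂ (A i)) :=
  spectrum_boundedContinuousFunction_eq_closure_iUnion_of_normal_general A hnormal
end

section
/- Let X be a finite-dimensional real vector space and let Y, Z be linear subspaces. Identify C_0(X/Y) with the subalgebra of bounded uniformly continuous functions on X of the form f ∘ π_Y, where π_Y : X → X/Y is the quotient map. Then C_0(X/Y) · C_0(X/Z), the closed linear span of products, equals C_0(X/(Y ∩ Z)). -/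
open Filter Topology
open scoped BoundedContinuousFunction

/-- The embedded copy of `C₀(X/Y)` inside the bounded continuous functions on `X`:
functions which are invariant under translations by `Y` and which vanish at infinity
modulo `Y` (i.e. tend to `0` as the distance to `Y` tends to infinity). -/
def embeddedC0 {X : Type*} [NormedAddCommGroup X] [NormedSpace ℝ X]
    (Y : Submodule ℝ X) : Set (X →ᵇ ℂ) :=
  {f | (∀ x : X, ∀ y ∈ Y, f (x + y) = f x) ∧
    Tendsto (⇑f) (Filter.comap (fun x : X => Metric.infDist x (Y : Set X)) atTop) (𝓝 0)}

/-!
All functions involved are invariant under `W = Y ⊓ Z`. In finite dimension the distance to `W`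
is at most a constant times the sum of the distances to `Y` and to `Z`, so a product `f * g` with
`f ∈ C₀(X/Y)`, `g ∈ C₀(X/Z)` vanishes at infinity modulo `W`; as `C₀(X/W)` is a closed subspace,
this gives one inclusion.

Conversely, let `V` be a complement of `W`; a `W`-invariant function is determined by its
restriction to `V`. Products of bumps separate the points of `V`, so by Stone–Weierstrass
`h ∈ C₀(X/W)` is uniformly approximated on a large compact piece `K` of `V` by some `Q` in the
star algebra generated by the products. The product `Φ` of two cut-offs along `Y` and `Z` equals
`1` where `h` is not small and vanishes on `V \ K`, and `Φ * Q` lies in the span of the products.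
-/

open Metric
open scoped Pointwise

theorem Filter.comap_atTop_le_sup_of_le_mul_add {α : Type*} {a b c : α → ℝ} {C : ℝ}
    (hC : 0 < C) (h : ∀ x, a x ≤ C * (b x + c x)) :
    comap a atTop ≤ comap b atTop ⊔ comap c atTop := by
  rintro s ⟨hb, hc⟩
  obtain ⟨i, -, hi⟩ := (atTop_basis.comap b).mem_iff.mp hb
  obtain ⟨j, -, hj⟩ := (atTop_basis.comap c).mem_iff.mp hc
  refine (atTop_basis.comap a).mem_iff.mpr ⟨C * (i + j), trivial, fun x hx => ?_⟩
  have : i + j ≤ b x + c x := le_of_mul_le_mul_left ((Set.mem_Ici.mp hx).trans (h x)) hC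
  by_cases hbx : i ≤ b x
  · exact hi hbx
  · exact hj (show j ≤ c x by linarith)

theorem norm_sub_smul_le_of_le {E : Type*} [SeminormedAddCommGroup E] [NormedSpace ℝ E]
    {a b : E} {t ε : ℝ} (ht₀ : 0 ≤ t) (ht₁ : t ≤ 1) (ha : t ≠ 1 → ‖a‖ ≤ ε)
    (hab : t ≠ 0 → ‖a - b‖ ≤ ε) : ‖a - t • b‖ ≤ ε := by
  have hsplit : a - t • b = (1 - t) • a + t • (a - b) := by
    rw [sub_smul, smul_sub, one_smul]; abel
  have h₁ : (1 - t) * ‖a‖ ≤ (1 - t) * ε := by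
    rcases eq_or_ne t 1 with rfl | h
    · simp
    · exact mul_le_mul_of_nonneg_left (ha h) (by linarith)
  have h₂ : t * ‖a - b‖ ≤ t * ε := by
    rcases eq_or_ne t 0 with rfl | h
    · simp
    · exact mul_le_mul_of_nonneg_left (hab h) ht₀
  calc ‖a - t • b‖ ≤ ‖(1 - t) • a‖ + ‖t • (a - b)‖ := hsplit ▸ norm_add_le _ _
    _ = (1 - t) * ‖a‖ + t * ‖a - b‖ := by
      rw [norm_smul, norm_smul, Real.norm_of_nonneg ht₀, Real.norm_of_nonneg (by linarith)]
    _ ≤ ε := by linarith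

theorem Metric.infDist_add_of_mem {M S : Type*} [SeminormedAddCommGroup M] [SetLike S M]
    [AddSubgroupClass S M] {s : S} (x : M) {y : M} (hy : y ∈ s) :
    infDist (x + y) s = infDist x s := by
  let H := AddSubgroup.ofClass s
  calc infDist (x + y) s = ‖((x + y : M) : M ⧸ H)‖ := (QuotientAddGroup.norm_mk (S := H) _).symm
    _ = ‖(x : M ⧸ H)‖ := by
      rw [QuotientAddGroup.mk_add, (QuotientAddGroup.eq_zero_iff y).mpr hy, add_zero]
    _ = infDist x s := QuotientAddGroup.norm_mk (S := H) x

namespace BoundedContinuousFunction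

theorem isClosed_setOf_tendsto {α β : Type*} [TopologicalSpace α] [PseudoMetricSpace β]
    (l : Filter α) (b : β) : IsClosed {f : α →ᵇ β | Tendsto f l (𝓝 b)} := by
  set s := {f : α →ᵇ β | Tendsto f l (𝓝 b)}
  refine isClosed_of_closure_subset fun f hf => ?_
  have := mem_closure_iff_nhdsWithin_neBot.mp hf
  have hunif : TendstoUniformly (fun g : α →ᵇ β => ⇑g) f (𝓝[s] f) :=
    tendsto_iff_tendstoUniformly.mp (tendsto_nhdsWithin_of_tendsto_nhds tendsto_id)
  exact hunif.tendsto_of_eventually_tendsto eventually_mem_nhdsWithin tendsto_const_nhds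

theorem tendsto_mul_of_tendsto_zero {α 𝕜 : Type*} [TopologicalSpace α] [NormedRing 𝕜]
    {l : Filter α} {f : α →ᵇ 𝕜} (hf : Tendsto f l (𝓝 0)) (g : α →ᵇ 𝕜) :
    Tendsto ⇑(f * g) l (𝓝 0) :=
  hf.zero_mul_isBoundedUnder_le (isBoundedUnder_of ⟨‖g‖, g.norm_coe_le_norm⟩)

theorem exists_mem_starSubalgebra_dist_lt_on_isCompact {α 𝕜 : Type*} [TopologicalSpace α]
    [RCLike 𝕜] (A : StarSubalgebra 𝕜 (α →ᵇ 𝕜)) {K : Set α} (hK : IsCompact K)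
    (hsep : K.Pairwise fun x y => ∃ f ∈ A, f x ≠ f y) (h : α →ᵇ 𝕜) {ε : ℝ} (hε : 0 < ε) :
    ∃ q ∈ A, ∀ x ∈ K, dist (h x) (q x) < ε := by
  have := isCompact_iff_compactSpace.mp hK
  let restrict : (α →ᵇ 𝕜) →⋆ₐ[𝕜] C(K, 𝕜) :=
    (ContinuousMap.compStarAlgHom' 𝕜 𝕜 ⟨Subtype.val, continuous_subtype_val⟩).comp
      (toContinuousMapStarₐ 𝕜)
  have hdense := ContinuousMap.starSubalgebra_topologicalClosure_eq_top_of_separatesPoints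
    (A.map restrict) (by
      rintro ⟨x, hx⟩ ⟨y, hy⟩ hxy
      obtain ⟨f, hfA, hf⟩ := hsep hx hy fun h => hxy (Subtype.ext h)
      exact ⟨_, ⟨restrict f, StarSubalgebra.mem_map.mpr ⟨f, hfA, rfl⟩, rfl⟩, hf⟩)
  have hmem : restrict h ∈ closure (A.map restrict : Set C(K, 𝕜)) := by
    rw [← StarSubalgebra.topologicalClosure_coe, hdense]; trivial
  obtain ⟨_, ⟨q, hqA, rfl⟩, hq⟩ := Metric.mem_closure_iff.mp hmem ε hε
  exact ⟨q, hqA, fun x hx => (ContinuousMap.dist_apply_le_dist ⟨x, hx⟩).trans_lt hq⟩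

end BoundedContinuousFunction

namespace Submodule

theorem star_mem_span_of_star_mem {R A : Type*} [CommSemiring R] [StarRing R]
    [AddCommMonoid A] [StarAddMonoid A] [Module R A] [StarModule R A] {S : Set A}
    (hstar : ∀ a ∈ S, star a ∈ S) {p : A} (hp : p ∈ span R S) : star p ∈ span R S := by
  induction hp using span_induction with
  | mem a ha => exact subset_span (hstar a ha)
  | zero => simp
  | add a b _ _ ha hb => simpa using add_mem ha hb
  | smul c a _ ha => simpa using smul_mem _ (star c) ha

theorem mul_mem_span_of_mul_mem {R A : Type*} [CommSemiring R] [Semiring A] [Algebra R A]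
    {S : Set A} (hmul : ∀ a ∈ S, ∀ b ∈ S, a * b ∈ S) {p q : A} (hp : p ∈ span R S)
    (hq : q ∈ span R S) : p * q ∈ span R S := by
  have hle : span R S * span R S ≤ span R S := by
    rw [span_mul_span, span_le]
    rintro _ ⟨a, ha, b, hb, rfl⟩
    exact subset_span (hmul a ha b hb)
  exact hle (mul_mem_mul hp hq)

theorem mul_mem_span_of_mem_starAlgebraAdjoin {R A : Type*} [CommSemiring R] [StarRing R]
    [CommSemiring A] [StarRing A] [Algebra R A] [StarModule R A] {S : Set A}
    (hmul : ∀ a ∈ S, ∀ b ∈ S, a * b ∈ S) (hstar : ∀ a ∈ S, star a ∈ S)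
    {p q : A} (hp : p ∈ span R S) (hq : q ∈ StarAlgebra.adjoin R S) : p * q ∈ span R S := by
  induction hq using StarAlgebra.adjoin_induction generalizing p with
  | mem a ha => exact mul_mem_span_of_mul_mem hmul hp (subset_span ha)
  | algebraMap r => simpa [Algebra.smul_def, mul_comm] using smul_mem _ r hp
  | add a b _ _ ha hb => simpa [mul_add] using add_mem (ha hp) (hb hp)
  | mul a b _ _ ha hb => simpa [mul_assoc] using hb (ha hp)
  | star a _ ha =>
    simpa [mul_comm] using
      star_mem_span_of_star_mem hstar (ha (star_mem_span_of_star_mem hstar hp))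

end Submodule

section

variable {X : Type*} [NormedAddCommGroup X] [NormedSpace ℝ X]

def embeddedC0Subalgebra (Y : Submodule ℝ X) : NonUnitalStarSubalgebra ℂ (X →ᵇ ℂ) where
  carrier := embeddedC0 Y
  add_mem' hf hg :=
    ⟨fun x y hy => by simp [hf.1 x y hy, hg.1 x y hy],
      by simpa [Pi.add_def] using hf.2.add hg.2⟩
  zero_mem' := ⟨fun _ _ _ => rfl, tendsto_const_nhds⟩
  mul_mem' {_ g} hf hg :=
    ⟨fun x y hy => by simp [hf.1 x y hy, hg.1 x y hy],
      BoundedContinuousFunction.tendsto_mul_of_tendsto_zero hf.2 g⟩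
  smul_mem' c _ hf := ⟨fun x y hy => by simp [hf.1 x y hy], by simpa using hf.2.const_smul c⟩
  star_mem' hf := ⟨fun x y hy => by simp [hf.1 x y hy], by simpa [Pi.star_def] using hf.2.star⟩

theorem isClosed_embeddedC0 (Y : Submodule ℝ X) : IsClosed (embeddedC0 Y) := by
  have hinv : IsClosed {f : X →ᵇ ℂ | ∀ x : X, ∀ y ∈ Y, f (x + y) = f x} := by
    simp only [Set.ofPred_forall]
    exact isClosed_iInter fun x => isClosed_iInter fun y => isClosed_iInter fun _ =>
      isClosed_eq (continuous_eval_const _) (continuous_eval_const _)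
  exact hinv.inter (BoundedContinuousFunction.isClosed_setOf_tendsto _ _)

lemma mul_mem_embeddedC0_mul {Y Z : Submodule ℝ X} :
    ∀ p ∈ embeddedC0 Y * embeddedC0 Z, ∀ q ∈ embeddedC0 Y * embeddedC0 Z,
      p * q ∈ embeddedC0 Y * embeddedC0 Z := by
  rintro _ ⟨f, hf, g, hg, rfl⟩ _ ⟨f', hf', g', hg', rfl⟩
  exact ⟨f * f', (embeddedC0Subalgebra Y).mul_mem hf hf', g * g',
    (embeddedC0Subalgebra Z).mul_mem hg hg', mul_mul_mul_comm f f' g g'⟩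

lemma star_mem_embeddedC0_mul {Y Z : Submodule ℝ X} :
    ∀ p ∈ embeddedC0 Y * embeddedC0 Z, star p ∈ embeddedC0 Y * embeddedC0 Z := by
  rintro _ ⟨f, hf, g, hg, rfl⟩
  exact ⟨star f, star_mem (show f ∈ embeddedC0Subalgebra Y from hf), star g,
    star_mem (show g ∈ embeddedC0Subalgebra Z from hg), (star_mul' f g).symm⟩

namespace EmbeddedC0

noncomputable def ramp (R δ s : ℝ) : ℝ :=
  max 0 (min 1 ((R + δ - s) / δ))

lemma ramp_nonneg (R δ s : ℝ) : 0 ≤ ramp R δ s := le_max_left _ _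

lemma ramp_le_one (R δ s : ℝ) : ramp R δ s ≤ 1 := max_le zero_le_one (min_le_left _ _)

@[fun_prop]
lemma continuous_ramp (R δ : ℝ) : Continuous (ramp R δ) := by
  unfold ramp; fun_prop

lemma ramp_eq_one {R δ s : ℝ} (hδ : 0 < δ) (hs : s ≤ R) : ramp R δ s = 1 := by
  rw [ramp, min_eq_left ((le_div_iff₀ hδ).mpr (by linarith)), max_eq_right zero_le_one]

lemma ramp_eq_zero {R δ s : ℝ} (hδ : 0 < δ) (hs : R + δ ≤ s) : ramp R δ s = 0 :=
  max_eq_left ((min_le_right _ _).trans (div_nonpos_of_nonpos_of_nonneg (by linarith) hδ.le))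

noncomputable def bump (Y : Submodule ℝ X) (a : X) (R δ : ℝ) : X →ᵇ ℂ :=
  .ofNormedAddCommGroup (fun x => (ramp R δ (infDist (x - a) Y) : ℂ)) (by fun_prop) 1
    fun x => by simpa [abs_of_nonneg (ramp_nonneg _ _ _)] using ramp_le_one _ _ _

@[simp]
lemma bump_apply (Y : Submodule ℝ X) (a : X) (R δ : ℝ) (x : X) :
    bump Y a R δ x = ramp R δ (infDist (x - a) Y) := rfl

lemma bump_mem_embeddedC0 (Y : Submodule ℝ X) (a : X) (R : ℝ) {δ : ℝ} (hδ : 0 < δ) :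
    bump Y a R δ ∈ embeddedC0 Y := by
  refine ⟨fun x y hy => ?_, ?_⟩
  · rw [bump_apply, bump_apply, add_sub_right_comm, infDist_add_of_mem _ hy]
  · refine tendsto_const_nhds.congr' ?_
    filter_upwards [tendsto_comap.eventually_ge_atTop (R + δ + ‖a‖)] with x hx
    have htri := infDist_le_infDist_add_dist (x := x) (y := x - a) (s := (Y : Set X))
    rw [dist_eq_norm, sub_sub_cancel] at htri
    simp [ramp_eq_zero hδ (show R + δ ≤ infDist (x - a) Y by linarith)]

end EmbeddedC0

open EmbeddedC0

lemma exists_mem_embeddedC0_apply_eq_one (Y : Submodule ℝ X) (x : X) :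
    ∃ f ∈ embeddedC0 Y, f x = 1 :=
  ⟨bump Y x 0 1, bump_mem_embeddedC0 Y x 0 one_pos,
    by simp [infDist_zero_of_mem Y.zero_mem, ramp_eq_one one_pos]⟩

lemma exists_mem_embeddedC0_apply_eq_one_apply_eq_zero {Y : Submodule ℝ X}
    (hY : IsClosed (Y : Set X)) {x x' : X} (h : x' - x ∉ Y) :
    ∃ f ∈ embeddedC0 Y, f x = 1 ∧ f x' = 0 := by
  have hδ : 0 < infDist (x' - x) Y := (hY.notMem_iff_infDist_pos ⟨0, Y.zero_mem⟩).mp h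
  exact ⟨bump Y x 0 _, bump_mem_embeddedC0 Y x 0 hδ,
    by simp [infDist_zero_of_mem Y.zero_mem, ramp_eq_one hδ], by simp [ramp_eq_zero hδ]⟩

lemma exists_mem_embeddedC0_mul_apply_ne {Y Z : Submodule ℝ X} (hY : IsClosed (Y : Set X))
    (hZ : IsClosed (Z : Set X)) {x x' : X} (h : x' - x ∉ Y ⊓ Z) :
    ∃ p ∈ embeddedC0 Y * embeddedC0 Z, p x ≠ p x' := by
  rcases not_and_or.mp (Submodule.mem_inf.not.mp h) with hxY | hxZ
  · obtain ⟨f, hf, hfx, hfx'⟩ := exists_mem_embeddedC0_apply_eq_one_apply_eq_zero hY hxY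
    obtain ⟨g, hg, hgx⟩ := exists_mem_embeddedC0_apply_eq_one Z x
    exact ⟨f * g, Set.mul_mem_mul hf hg, by simp [hfx, hfx', hgx]⟩
  · obtain ⟨f, hf, hfx⟩ := exists_mem_embeddedC0_apply_eq_one Y x
    obtain ⟨g, hg, hgx, hgx'⟩ := exists_mem_embeddedC0_apply_eq_one_apply_eq_zero hZ hxZ
    exact ⟨f * g, Set.mul_mem_mul hf hg, by simp [hfx, hgx, hgx']⟩

section FiniteDimensional

variable [FiniteDimensional ℝ X]

lemma exists_norm_le_mul_infDist_add_infDist {Y Z V : Submodule ℝ X}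
    (h : Disjoint V (Y ⊓ Z)) :
    ∃ C > 0, ∀ v ∈ V, ‖v‖ ≤ C * (infDist v Y + infDist v Z) := by
  have : IsClosed (Y : Set X) := Y.closed_of_finiteDimensional
  have : IsClosed (Z : Set X) := Z.closed_of_finiteDimensional
  let T : V →ₗ[ℝ] (X ⧸ Y) × (X ⧸ Z) := (Y.mkQ.prod Z.mkQ).comp V.subtype
  have hT : LinearMap.ker T = ⊥ := by
    refine LinearMap.ker_eq_bot'.mpr fun ⟨v, hv⟩ hTv => Subtype.ext ?_
    have hvY : v ∈ Y := (Submodule.Quotient.mk_eq_zero Y).mp (congrArg Prod.fst hTv)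
    have hvZ : v ∈ Z := (Submodule.Quotient.mk_eq_zero Z).mp (congrArg Prod.snd hTv)
    exact (Submodule.disjoint_def.mp h) v hv ⟨hvY, hvZ⟩
  obtain ⟨C, hC, hCT⟩ := T.exists_antilipschitzWith hT
  refine ⟨C, hC, fun v hv => ?_⟩
  calc ‖v‖ ≤ C * ‖T ⟨v, hv⟩‖ := by simpa using hCT.le_mul_dist ⟨v, hv⟩ 0
    _ ≤ C * (infDist v Y + infDist v Z) := by
      gcongr
      rw [Prod.norm_def]
      have hY : ‖Y.mkQ v‖ = infDist v Y := QuotientAddGroup.norm_mk v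
      have hZ : ‖Z.mkQ v‖ = infDist v Z := QuotientAddGroup.norm_mk v
      exact hY ▸ hZ ▸ max_le_add_of_nonneg (norm_nonneg _) (norm_nonneg _)

lemma exists_infDist_inf_le_mul_infDist_add_infDist (Y Z : Submodule ℝ X) :
    ∃ C > 0, ∀ x, infDist x (Y ⊓ Z : Submodule ℝ X) ≤
      C * (infDist x (Y : Set X) + infDist x (Z : Set X)) := by
  obtain ⟨V, hV⟩ := Submodule.exists_isCompl (Y ⊓ Z)
  obtain ⟨C, hC, hCV⟩ := exists_norm_le_mul_infDist_add_infDist hV.disjoint.symm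
  refine ⟨C, hC, fun x => ?_⟩
  obtain ⟨w, v, hw, hv, rfl⟩ := Submodule.codisjoint_iff_exists_add_eq.mp hV.codisjoint x
  rw [add_comm, infDist_add_of_mem v hw, infDist_add_of_mem v hw.1, infDist_add_of_mem v hw.2]
  calc infDist v ((Y ⊓ Z : Submodule ℝ X) : Set X) ≤ ‖v‖ := by
        simpa using infDist_le_dist_of_mem (Submodule.zero_mem (Y ⊓ Z)) (x := v)
    _ ≤ _ := hCV v hv

lemma comap_infDist_inf_atTop_le (Y Z : Submodule ℝ X) :
    comap (fun x => infDist x ((Y ⊓ Z : Submodule ℝ X) : Set X)) atTop ≤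
      comap (fun x => infDist x (Y : Set X)) atTop ⊔
        comap (fun x => infDist x (Z : Set X)) atTop :=
  have ⟨_, hC, hle⟩ := exists_infDist_inf_le_mul_infDist_add_infDist Y Z
  comap_atTop_le_sup_of_le_mul_add hC hle

lemma mul_mem_embeddedC0_inf {Y Z : Submodule ℝ X} {f g : X →ᵇ ℂ} (hf : f ∈ embeddedC0 Y)
    (hg : g ∈ embeddedC0 Z) : f * g ∈ embeddedC0 (Y ⊓ Z) := by
  refine ⟨fun x y hy => by simp [hf.1 x y hy.1, hg.1 x y hy.2], ?_⟩
  refine .mono_left ?_ (comap_infDist_inf_atTop_le Y Z)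
  exact (BoundedContinuousFunction.tendsto_mul_of_tendsto_zero hf.2 g).sup
    (mul_comm g f ▸ BoundedContinuousFunction.tendsto_mul_of_tendsto_zero hg.2 f)

lemma closure_span_embeddedC0_mul_subset (Y Z : Submodule ℝ X) :
    closure (Submodule.span ℂ (embeddedC0 Y * embeddedC0 Z) : Set (X →ᵇ ℂ)) ⊆
      embeddedC0 (Y ⊓ Z) := by
  refine closure_minimal ?_ (isClosed_embeddedC0 _)
  refine (Submodule.span_le
    (p := (embeddedC0Subalgebra (Y ⊓ Z)).toNonUnitalSubalgebra.toSubmodule)).mpr ?_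
  rintro _ ⟨f, hf, g, hg, rfl⟩
  exact mul_mem_embeddedC0_inf hf hg

lemma exists_mem_span_forall_dist_le {Y Z V : Submodule ℝ X} (hV : IsCompl (Y ⊓ Z) V)
    {h : X →ᵇ ℂ} (hh : h ∈ embeddedC0 (Y ⊓ Z)) {ε : ℝ} (hε : 0 < ε) :
    ∃ q ∈ Submodule.span ℂ (embeddedC0 Y * embeddedC0 Z), ∀ v ∈ V, dist (h v) (q v) ≤ ε := by
  set S := embeddedC0 Y * embeddedC0 Z
  obtain ⟨C, hC, hCV⟩ := exists_norm_le_mul_infDist_add_infDist hV.disjoint.symm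
  obtain ⟨R, hR⟩ : ∃ R, ∀ x, R ≤ infDist x ((Y ⊓ Z : Submodule ℝ X) : Set X) → ‖h x‖ ≤ ε := by
    simpa using (atTop_basis.comap _).eventually_iff.mp
      (hh.2.eventually (closedBall_mem_nhds 0 hε))
  -- the radius bounds `‖v‖`, `v ∈ V`, wherever the cut-off `bump Y 0 R 1 * bump Z 0 R 1` is nonzero
  set K := (V : Set X) ∩ closedBall 0 (C * (2 * R + 2))
  have hK : IsCompact K := (isCompact_closedBall _ _).inter_left V.closed_of_finiteDimensional
  have hsep : K.Pairwise fun x y => ∃ f ∈ StarAlgebra.adjoin ℂ S, f x ≠ f y := by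
    rintro x ⟨hx, -⟩ y ⟨hy, -⟩ hxy
    have hyx : y - x ∉ Y ⊓ Z := fun h => hxy (sub_eq_zero.mp
      ((Submodule.disjoint_def.mp hV.disjoint) _ h (V.sub_mem hy hx))).symm
    obtain ⟨p, hp, hpxy⟩ := exists_mem_embeddedC0_mul_apply_ne
      Y.closed_of_finiteDimensional Z.closed_of_finiteDimensional hyx
    exact ⟨p, StarAlgebra.subset_adjoin ℂ S hp, hpxy⟩
  obtain ⟨Q, hQ, hQK⟩ :=
    BoundedContinuousFunction.exists_mem_starSubalgebra_dist_lt_on_isCompact _ hK hsep h hε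
  have hΦ : bump Y 0 R 1 * bump Z 0 R 1 ∈ S :=
    Set.mul_mem_mul (bump_mem_embeddedC0 Y 0 R one_pos) (bump_mem_embeddedC0 Z 0 R one_pos)
  refine ⟨_, Submodule.mul_mem_span_of_mem_starAlgebraAdjoin
    mul_mem_embeddedC0_mul star_mem_embeddedC0_mul (Submodule.subset_span hΦ) hQ, fun v hv => ?_⟩
  set t := ramp R 1 (infDist v Y) * ramp R 1 (infDist v Z)
  have hΦv : (bump Y 0 R 1 * bump Z 0 R 1 * Q) v = t • Q v := by simp [t]
  rw [hΦv, dist_eq_norm]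
  refine norm_sub_smul_le_of_le (mul_nonneg (ramp_nonneg ..) (ramp_nonneg ..))
    (mul_le_one₀ (ramp_le_one ..) (ramp_nonneg ..) (ramp_le_one ..)) (fun ht => hR v ?_)
    (fun ht => (dist_eq_norm (h v) (Q v) ▸ hQK v ⟨hv, ?_⟩).le)
  · have hfar : R < infDist v Y ∨ R < infDist v Z := by
      by_contra! hnear
      exact ht (by simp [t, ramp_eq_one one_pos hnear.1, ramp_eq_one one_pos hnear.2])
    rcases hfar with hfar | hfar
    · exact hfar.le.trans (infDist_le_infDist_of_subset inf_le_left ⟨0, zero_mem _⟩)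
    · exact hfar.le.trans (infDist_le_infDist_of_subset inf_le_right ⟨0, zero_mem _⟩)
  · have hY : infDist v Y < R + 1 :=
      lt_of_not_ge fun hge => ht (by simp [t, ramp_eq_zero one_pos hge])
    have hZ : infDist v Z < R + 1 :=
      lt_of_not_ge fun hge => ht (by simp [t, ramp_eq_zero one_pos hge])
    rw [mem_closedBall, dist_zero_right]
    exact (hCV v hv).trans (mul_le_mul_of_nonneg_left (by linarith) hC.le)

lemma embeddedC0_inf_subset_closure_span (Y Z : Submodule ℝ X) :
    embeddedC0 (Y ⊓ Z) ⊆
      closure (Submodule.span ℂ (embeddedC0 Y * embeddedC0 Z) : Set (X →ᵇ ℂ)) := by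
  intro h hh
  obtain ⟨V, hV⟩ := Submodule.exists_isCompl (Y ⊓ Z)
  refine Metric.mem_closure_iff.mpr fun ε hε => ?_
  obtain ⟨q, hq, hqV⟩ := exists_mem_span_forall_dist_le hV hh (half_pos hε)
  have hqW := closure_span_embeddedC0_mul_subset Y Z (subset_closure hq)
  refine ⟨q, hq, lt_of_le_of_lt ((BoundedContinuousFunction.dist_le (half_pos hε).le).mpr
    fun x => ?_) (half_lt_self hε)⟩
  obtain ⟨w, v, hw, hv, rfl⟩ := Submodule.codisjoint_iff_exists_add_eq.mp hV.codisjoint x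
  rw [add_comm, hh.1 v w hw, hqW.1 v w hw]
  exact hqV v hv

end FiniteDimensional

end

/-- Let `X` be a finite-dimensional real vector space and `Y, Z` linear
subspaces.  Identifying `C₀(X/Y)` with its embedded copy in the bounded (uniformly)
continuous functions on `X`, the closed linear span of the products
`C₀(X/Y) · C₀(X/Z)` equals `C₀(X/(Y ∩ Z))`. -/
theorem embeddedC0_mul_embeddedC0
    {X : Type*} [NormedAddCommGroup X] [NormedSpace ℝ X] [FiniteDimensional ℝ X]
    (Y Z : Submodule ℝ X) :
    closure ((Submodule.span ℂ
        {h : X →ᵇ ℂ | ∃ f ∈ embeddedC0 Y, ∃ g ∈ embeddedC0 Z, h = f * g} :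
          Submodule ℂ (X →ᵇ ℂ)) : Set (X →ᵇ ℂ))
      = embeddedC0 (Y ⊓ Z) := by
  have hS : {h : X →ᵇ ℂ | ∃ f ∈ embeddedC0 Y, ∃ g ∈ embeddedC0 Z, h = f * g} =
      embeddedC0 Y * embeddedC0 Z := by
    ext h
    simp [Set.mem_mul, eq_comm]
  rw [hS]
  exact (closure_span_embeddedC0_mul_subset Y Z).antisymm
    (embeddedC0_inf_subset_closure_span Y Z)
end

section
/- Let X = ℝ^d with Lebesgue measure and H = L²(X). There is a constant C depending only on d such that for all ε > 0 and all u ∈ H: ‖χ_{4/ε}(q) u‖² ≤ C ε^{-d} ∫_{|a|<ε} ‖e^{i⟨q,a⟩} u − u‖² da, where χ_r is the indicator of {x : |x| > r} and e^{i⟨q,a⟩} is multiplication by x ↦ e^{i⟨x,a⟩}. -/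
/-!
If `π ≤ ε ‖x‖`, choose `c` parallel to `x` with `⟪x, 2c⟫ = π` and `‖c‖ ≤ ε / 2`. Translating `a`
by `2c` flips the sign of `e^{i⟪x,a⟫}`, so by the parallelogram law
`|e^{i⟪x,a⟫} - 1|² + |e^{i⟪x,a+2c⟫} - 1|² = 4`. Integrating this over `B(-c, ε/2)`, whose
translate `B(c, ε/2)` also lies in `B(0, ε)`, gives
`∫_{|a|<ε} |e^{i⟪x,a⟫} - 1|² da ≥ 2 |B(0, ε/2)|`, which is of order `ε^d`. Since `‖e^{i⟪q,a⟫} u - u‖² = ∫ |e^{i⟪x,a⟫} - 1|² |u x|² dx`, Tonelli's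
theorem finishes the proof.
-/

open MeasureTheory Metric Complex
open scoped ENNReal RealInnerProductSpace

lemma enorm_sub_one_sq_add_enorm_neg_sub_one_sq {z : ℂ} (hz : ‖z‖ = 1) :
    ‖z - 1‖ₑ ^ 2 + ‖-z - 1‖ₑ ^ 2 = 4 := by
  have h := parallelogram_law_with_norm ℝ z 1
  rw [hz, norm_one, ← norm_neg (z + 1), neg_add'] at h
  simp only [← ofReal_norm, ← ENNReal.ofReal_pow (norm_nonneg _),
    ← ENNReal.ofReal_add (sq_nonneg _) (sq_nonneg _)]
  rw [add_comm, h]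
  norm_num

lemma enorm_mul_sub_self (c w : ℂ) : ‖c * w - w‖ₑ = ‖c - 1‖ₑ * ‖w‖ₑ := by
  rw [← enorm_mul, sub_one_mul]

section PhaseModulation

variable {E : Type*} [NormedAddCommGroup E] [InnerProductSpace ℝ E]

lemma enorm_exp_inner_sub_one_sq_add_of_inner_eq_pi {x h : E} (hxh : ⟪x, h⟫ = Real.pi) (a : E) :
    ‖exp (I * ⟪x, a⟫) - 1‖ₑ ^ 2 + ‖exp (I * ⟪x, a + h⟫) - 1‖ₑ ^ 2 = 4 := by
  have hshift : exp (I * ⟪x, a + h⟫) = -exp (I * ⟪x, a⟫) := by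
    rw [inner_add_right, hxh, ofReal_add, mul_add, exp_add, mul_comm I Real.pi,
      exp_pi_mul_I, mul_neg_one]
  rw [hshift]
  exact enorm_sub_one_sq_add_enorm_neg_sub_one_sq (by rw [mul_comm]; exact norm_exp_ofReal_mul_I _)

variable [MeasurableSpace E] [BorelSpace E]

theorem two_mul_measure_ball_le_lintegral_enorm_exp_inner_sub_one_sq (μ : Measure E)
    [μ.IsAddRightInvariant] {x : E} {ε : ℝ} (hx : Real.pi ≤ ε * ‖x‖) :
    2 * μ (ball 0 (ε / 2)) ≤ ∫⁻ a in ball 0 ε, ‖exp (I * ⟪x, a⟫) - 1‖ₑ ^ 2 ∂μ := by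
  set f : E → ℝ≥0∞ := fun a => ‖exp (I * ⟪x, a⟫) - 1‖ₑ ^ 2
  have hf : Measurable f := by fun_prop
  have hx0 : 0 < ‖x‖ := by
    refine (norm_nonneg x).lt_of_ne fun h => ?_
    rw [← h, mul_zero] at hx
    linarith [Real.pi_pos]
  set c : E := (Real.pi / (2 * ‖x‖ ^ 2)) • x
  have hxc : ⟪x, c + c⟫ = Real.pi := by
    rw [← two_smul ℝ c, inner_smul_right, inner_smul_right, real_inner_self_eq_norm_sq]
    field_simp
  have hc : ‖c‖ ≤ ε / 2 := by
    rw [norm_smul, Real.norm_of_nonneg (by positivity), le_div_iff₀ two_pos]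
    calc Real.pi / (2 * ‖x‖ ^ 2) * ‖x‖ * 2 = Real.pi / ‖x‖ := by field_simp
      _ ≤ ε := by rwa [div_le_iff₀ hx0]
  have hsub : ∀ b : E, ‖b‖ ≤ ε / 2 → ball b (ε / 2) ⊆ ball 0 ε := fun b hb =>
    ball_subset_ball' (by rw [dist_zero_right]; linarith)
  have hshift :
      ∫⁻ a in ball (-c) (ε / 2), f (a + (c + c)) ∂μ = ∫⁻ a in ball c (ε / 2), f a ∂μ := by
    rw [← (measurePreserving_add_right μ (c + c)).setLIntegral_comp_preimage measurableSet_ball hf,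
      preimage_add_right_ball, sub_add_cancel_left]
  have hmeas : μ (ball (-c) (ε / 2)) = μ (ball 0 (ε / 2)) := by
    rw [← measure_preimage_add_right μ c (ball 0 (ε / 2)), preimage_add_right_ball, zero_sub]
  have key : 2 * (2 * μ (ball 0 (ε / 2))) ≤ 2 * ∫⁻ a in ball 0 ε, f a ∂μ := calc
    2 * (2 * μ (ball 0 (ε / 2))) = ∫⁻ a in ball (-c) (ε / 2), (f a + f (a + (c + c))) ∂μ := by
      simp only [f, enorm_exp_inner_sub_one_sq_add_of_inner_eq_pi hxc, setLIntegral_const, hmeas]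
      rw [← mul_assoc]; norm_num
    _ = ∫⁻ a in ball (-c) (ε / 2), f a ∂μ + ∫⁻ a in ball c (ε / 2), f a ∂μ := by
      rw [lintegral_add_left hf, hshift]
    _ ≤ ∫⁻ a in ball 0 ε, f a ∂μ + ∫⁻ a in ball 0 ε, f a ∂μ := by
      gcongr <;> apply hsub <;> simpa only [norm_neg]
    _ = 2 * ∫⁻ a in ball 0 ε, f a ∂μ := by rw [two_mul]
  exact (ENNReal.mul_le_mul_iff_right two_ne_zero ENNReal.ofNat_ne_top).1 key

theorem two_mul_measure_ball_mul_lintegral_le [SecondCountableTopology E] (μ ν : Measure E)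
    [SFinite μ] [SFinite ν] [μ.IsAddRightInvariant] {u : E → ℂ} (hu : Measurable u) {ε : ℝ}
    (hε : 0 < ε) :
    2 * μ (ball 0 (ε / 2)) * ∫⁻ x in {x | 4 / ε < ‖x‖}, ‖u x‖ₑ ^ 2 ∂ν ≤
      ∫⁻ a in ball 0 ε, ∫⁻ x, ‖exp (I * ⟪x, a⟫) * u x - u x‖ₑ ^ 2 ∂ν ∂μ := by
  set f : E → E → ℝ≥0∞ := fun x a => ‖exp (I * ⟪x, a⟫) - 1‖ₑ ^ 2
  have hW : MeasurableSet {x : E | 4 / ε < ‖x‖} :=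
    measurableSet_lt measurable_const measurable_norm
  calc 2 * μ (ball 0 (ε / 2)) * ∫⁻ x in {x | 4 / ε < ‖x‖}, ‖u x‖ₑ ^ 2 ∂ν
      = ∫⁻ x in {x | 4 / ε < ‖x‖}, 2 * μ (ball 0 (ε / 2)) * ‖u x‖ₑ ^ 2 ∂ν :=
        (lintegral_const_mul _ (by fun_prop)).symm
    _ ≤ ∫⁻ x in {x | 4 / ε < ‖x‖}, (∫⁻ a in ball 0 ε, f x a ∂μ) * ‖u x‖ₑ ^ 2 ∂ν := by
        refine setLIntegral_mono' hW fun x hx => ?_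
        have hx : Real.pi ≤ ε * ‖x‖ := by
          rw [Set.mem_ofPred_eq, div_lt_iff₀ hε, mul_comm] at hx
          linarith [Real.pi_lt_four]
        gcongr
        exact two_mul_measure_ball_le_lintegral_enorm_exp_inner_sub_one_sq μ hx
    _ ≤ ∫⁻ x, (∫⁻ a in ball 0 ε, f x a ∂μ) * ‖u x‖ₑ ^ 2 ∂ν := setLIntegral_le_lintegral _ _
    _ = ∫⁻ x, ∫⁻ a in ball 0 ε, f x a * ‖u x‖ₑ ^ 2 ∂μ ∂ν := by
        refine lintegral_congr fun x => (lintegral_mul_const _ ?_).symm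
        fun_prop
    _ = ∫⁻ a in ball 0 ε, ∫⁻ x, f x a * ‖u x‖ₑ ^ 2 ∂ν ∂μ :=
        lintegral_lintegral_swap (by fun_prop)
    _ = ∫⁻ a in ball 0 ε, ∫⁻ x, ‖exp (I * ⟪x, a⟫) * u x - u x‖ₑ ^ 2 ∂ν ∂μ := by
        simp only [f, enorm_mul_sub_self, mul_pow]

end PhaseModulation

/-- On `L²(ℝ^d)` there is a constant `C` depending only on `d` such that for
all `ε > 0` and all (measurable) `u`:
`‖χ_{4/ε}(q) u‖² ≤ C ε^{-d} ∫_{|a|<ε} ‖e^{i⟨q,a⟩} u − u‖² da`,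
where `χ_r` is the indicator of `{|x| > r}` and `e^{i⟨q,a⟩}` is multiplication by
`x ↦ e^{i⟨x,a⟩}`.  The squared norms are written as (extended) integrals. -/
theorem chi_bound_by_phase_modulation (d : ℕ) :
    ∃ C : ℝ, 0 < C ∧ ∀ (ε : ℝ), 0 < ε →
      ∀ u : EuclideanSpace ℝ (Fin d) → ℂ, Measurable u →
        (∫⁻ x in {x : EuclideanSpace ℝ (Fin d) | 4 / ε < ‖x‖},
            (‖u x‖₊ : ℝ≥0∞) ^ 2) ≤
          ENNReal.ofReal (C * ε⁻¹ ^ d) *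
            ∫⁻ a in Metric.ball (0 : EuclideanSpace ℝ (Fin d)) ε,
              ∫⁻ x : EuclideanSpace ℝ (Fin d),
                (‖Complex.exp (Complex.I * ((inner ℝ x a : ℝ) : ℂ)) * u x - u x‖₊ : ℝ≥0∞) ^ 2 := by
  set v := volume.real (ball (0 : EuclideanSpace ℝ (Fin d)) 1)
  have hv : 0 < v := ENNReal.toReal_pos (measure_ball_pos _ _ one_pos).ne' measure_ball_lt_top.ne
  refine ⟨2 ^ d / v, by positivity, fun ε hε u hu => ?_⟩
  have hball :
      volume (ball (0 : EuclideanSpace ℝ (Fin d)) (ε / 2)) = ENNReal.ofReal ((ε / 2) ^ d * v) := by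
    rw [Measure.addHaar_ball_of_pos _ _ (by positivity), finrank_euclideanSpace_fin,
      ENNReal.ofReal_mul (by positivity), ofReal_measureReal measure_ball_lt_top.ne]
  have hC : 1 ≤ ENNReal.ofReal (2 ^ d / v * ε⁻¹ ^ d) *
      (2 * volume (ball (0 : EuclideanSpace ℝ (Fin d)) (ε / 2))) := by
    rw [hball, ← ENNReal.ofReal_ofNat 2, ← ENNReal.ofReal_mul zero_le_two,
      ← ENNReal.ofReal_mul (by positivity)]
    have h2 : 2 ^ d / v * ε⁻¹ ^ d * (2 * ((ε / 2) ^ d * v)) = 2 := by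
      rw [div_pow, inv_pow]
      field_simp
    rw [h2, ENNReal.one_le_ofReal]
    exact one_le_two
  calc _ ≤ _ * (2 * volume (ball (0 : EuclideanSpace ℝ (Fin d)) (ε / 2)) * _) :=
        by rw [← mul_assoc]; exact le_mul_of_one_le_left' hC
    _ ≤ _ := by gcongr; exact two_mul_measure_ball_mul_lintegral_le volume volume hu hε
end

section
/- The linear span of the exponential functions s ↦ e^{−sλ}, λ > 0, is dense in L¹(0,∞). -/
/-!
Approximate `f` in `L¹(0,∞)` by a continuous compactly supported `f₀`. Under the substitution
`x = e^{-s}` one has `f₀ s = x H(x)` with `H(x) = x⁻¹ f₀(-log x)`, which is continuous on `[0,1]`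
because it vanishes near `0`. A polynomial `p` uniformly `ε`-close to `H` on `[0,1]` (Weierstrass)
gives `g(s) = e^{-s} p(e^{-s})`, a combination of the exponentials `e^{-(k+1)s}`, with
`|f₀ s - g s| ≤ ε e^{-s}`, hence `∫₀^∞ |f₀ - g| ≤ ε`.
-/

open MeasureTheory Set Filter Polynomial

def decayingExponentials : Set (ℝ → ℂ) :=
  {h | ∃ l : ℝ, 0 < l ∧ h = fun s : ℝ => Complex.exp (-(s * l : ℝ))}

lemma integrableOn_Ioi_of_mem_span_decayingExponentials {g : ℝ → ℂ}
    (hg : g ∈ Submodule.span ℂ decayingExponentials) : IntegrableOn g (Ioi 0) := by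
  induction hg using Submodule.span_induction with
  | mem h hh =>
    obtain ⟨l, hl, rfl⟩ := hh
    simpa [mul_comm] using integrableOn_exp_mul_complex_Ioi (a := -l) (by simpa) 0
  | zero => exact integrableOn_zero
  | add _ _ _ _ h₁ h₂ => exact h₁.add h₂
  | smul c _ _ h => exact h.smul c

lemma exp_neg_mul_eval_exp_neg_mem_span_decayingExponentials (p : ℂ[X]) :
    (fun s : ℝ => Complex.exp (-s) * p.eval (Complex.exp (-s))) ∈
      Submodule.span ℂ decayingExponentials := by
  induction p using Polynomial.induction_on' with
  | add p q hp hq =>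
    convert Submodule.add_mem _ hp hq using 1
    funext s
    simp only [eval_add, mul_add, Pi.add_apply]
  | monomial k c =>
    have hexp : (fun s : ℝ => Complex.exp (-(s * (k + 1 : ℝ) : ℝ))) ∈ decayingExponentials :=
      ⟨k + 1, by positivity, rfl⟩
    convert Submodule.smul_mem _ c (Submodule.subset_span hexp) using 1
    funext s
    simp only [eval_monomial, Pi.smul_apply, smul_eq_mul, ← Complex.exp_nat_mul]
    rw [mul_left_comm, ← Complex.exp_add]
    push_cast
    ring_nf

lemma exists_polynomial_near_of_continuousOn_complex (a b : ℝ) (f : ℝ → ℂ)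
    (hf : ContinuousOn f (Icc a b)) {ε : ℝ} (hε : 0 < ε) :
    ∃ p : ℂ[X], ∀ x ∈ Icc a b, ‖p.eval (x : ℂ) - f x‖ < ε := by
  obtain ⟨P, hP⟩ := exists_polynomial_near_of_continuousOn a b (fun x => (f x).re)
    (Complex.continuous_re.comp_continuousOn hf) (ε / 2) (half_pos hε)
  obtain ⟨Q, hQ⟩ := exists_polynomial_near_of_continuousOn a b (fun x => (f x).im)
    (Complex.continuous_im.comp_continuousOn hf) (ε / 2) (half_pos hε)
  have eval_map_ofReal (R : ℝ[X]) (x : ℝ) :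
      (R.map Complex.ofRealHom).eval (x : ℂ) = R.eval x := by
    rw [eval_map]; exact eval₂_at_apply _ _
  refine ⟨P.map Complex.ofRealHom + C Complex.I * Q.map Complex.ofRealHom, fun x hx => ?_⟩
  calc _ ≤ |P.eval x - (f x).re| + |Q.eval x - (f x).im| := by
        refine (Complex.norm_le_abs_re_add_abs_im _).trans_eq ?_
        simp [eval_map_ofReal]
    _ < ε := by linarith [hP x hx, hQ x hx]

lemma continuous_inv_mul_comp_neg_log {f : ℝ → ℂ} (hf : Continuous f)
    (hfs : HasCompactSupport f) : Continuous fun x : ℝ => (x : ℂ)⁻¹ * f (-Real.log x) := by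
  refine continuous_iff_continuousAt.2 fun x => ?_
  rcases eq_or_ne x 0 with rfl | hx
  · have hf_atTop : ∀ᶠ s in atTop, f s = 0 :=
      eventually_of_mem (atTop_le_cocompact hfs.isCompact.compl_mem_cocompact)
        fun s hs => image_eq_zero_of_notMem_tsupport hs
    have hlog := tendsto_neg_atBot_atTop.comp Real.tendsto_log_nhdsNE_zero
    rw [← continuousWithinAt_compl_self, ContinuousWithinAt]
    refine tendsto_const_nhds.congr' ?_
    filter_upwards [hlog.eventually hf_atTop] with x hx
    simp only [Function.comp_apply] at hx
    simp [hx]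
  · exact (Complex.continuous_ofReal.continuousAt.inv₀ (by exact_mod_cast hx)).mul
      (hf.continuousAt.comp (Real.continuousAt_log hx).neg)

lemma integral_norm_sub_le_add {α E : Type*} [MeasurableSpace α] {μ : Measure α}
    [NormedAddCommGroup E] {f g h : α → E} (hfg : Integrable (f - g) μ)
    (hgh : Integrable (g - h) μ) :
    ∫ x, ‖f x - h x‖ ∂μ ≤ ∫ x, ‖f x - g x‖ ∂μ + ∫ x, ‖g x - h x‖ ∂μ := by
  refine (integral_mono_of_nonneg (ae_of_all _ fun _ => norm_nonneg _) (hfg.norm.add hgh.norm)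
    (ae_of_all _ fun _ => norm_sub_le_norm_sub_add_norm_sub _ _ _)).trans_eq ?_
  exact integral_add hfg.norm hgh.norm

lemma exists_mem_span_decayingExponentials_integral_norm_sub_le {f : ℝ → ℂ} (hf : Continuous f)
    (hfs : HasCompactSupport f) {ε : ℝ} (hε : 0 < ε) :
    ∃ g ∈ Submodule.span ℂ decayingExponentials, ∫ s in Ioi 0, ‖f s - g s‖ ≤ ε := by
  obtain ⟨p, hp⟩ := exists_polynomial_near_of_continuousOn_complex 0 1 _
    (continuous_inv_mul_comp_neg_log hf hfs).continuousOn hε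
  refine ⟨_, exp_neg_mul_eval_exp_neg_mem_span_decayingExponentials p, ?_⟩
  have hpointwise : ∀ s ∈ Ioi (0 : ℝ),
      ‖f s - Complex.exp (-s) * p.eval (Complex.exp (-s))‖ ≤ ε * Real.exp (-s) := by
    intro s hs
    set x := Real.exp (-s)
    have hx : 0 < x := Real.exp_pos _
    have hx1 : x ≤ 1 := Real.exp_le_one_iff.2 (by linarith [mem_Ioi.1 hs])
    have hfx : f s = x * ((x : ℂ)⁻¹ * f (-Real.log x)) := by
      rw [Real.log_exp, neg_neg, mul_inv_cancel_left₀ (by exact_mod_cast hx.ne')]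
    have hcexp : Complex.exp (-s) = x := by simp [x, Complex.ofReal_exp]
    calc ‖f s - Complex.exp (-s) * p.eval (Complex.exp (-s))‖
        = x * ‖p.eval (x : ℂ) - (x : ℂ)⁻¹ * f (-Real.log x)‖ := by
          rw [hcexp, hfx, ← mul_sub, norm_mul, norm_sub_rev, Complex.norm_of_nonneg hx.le]
      _ ≤ ε * x := by
          rw [mul_comm]; exact mul_le_mul_of_nonneg_right (hp x ⟨hx.le, hx1⟩).le hx.le
  calc ∫ s in Ioi 0, ‖f s - Complex.exp (-s) * p.eval (Complex.exp (-s))‖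
      ≤ ∫ s in Ioi 0, ε * Real.exp (-s) :=
        integral_mono_of_nonneg (ae_of_all _ fun _ => norm_nonneg _)
          ((integrableOn_exp_neg_Ioi 0).const_mul ε)
          ((ae_restrict_iff' measurableSet_Ioi).2 (ae_of_all _ hpointwise))
    _ = ε := by rw [integral_const_mul, integral_exp_neg_Ioi_zero, mul_one]

/-- The linear span of the exponential functions `s ↦ e^{−sλ}`, `λ > 0`, is
dense in `L¹(0,∞)`: every integrable function on `(0,∞)` can be approximated in the `L¹`
norm by elements of this span. -/
theorem span_exponentials_dense_L1 :
    ∀ f : ℝ → ℂ, IntegrableOn f (Set.Ioi 0) →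
      ∀ δ : ℝ, 0 < δ →
        ∃ g ∈ Submodule.span ℂ
            {h : ℝ → ℂ | ∃ l : ℝ, 0 < l ∧ h = fun s : ℝ => Complex.exp (-(s * l : ℝ))},
          ∫ s in Set.Ioi (0 : ℝ), ‖f s - g s‖ < δ := by
  intro f hf δ hδ
  obtain ⟨f₀, hf₀_supp, hff₀, hf₀_cont, hf₀⟩ :=
    hf.exists_hasCompactSupport_integral_sub_le (div_pos hδ three_pos)
  obtain ⟨g, hg, hf₀g⟩ := exists_mem_span_decayingExponentials_integral_norm_sub_le
    hf₀_cont hf₀_supp (div_pos hδ three_pos)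
  refine ⟨g, hg, ?_⟩
  calc ∫ s in Ioi 0, ‖f s - g s‖
      ≤ (∫ s in Ioi 0, ‖f s - f₀ s‖) + ∫ s in Ioi 0, ‖f₀ s - g s‖ :=
        integral_norm_sub_le_add (hf.sub hf₀)
          (hf₀.sub (integrableOn_Ioi_of_mem_span_decayingExponentials hg))
    _ < δ := by linarith
end

section
/- Let v : ℝ → ℝ be bounded Borel with limits v(x) → a_± as x → ±∞, where a_+ ≠ a_−. Let H = p² + v(q) on L²(ℝ). Then s-lim_{s→+∞} e^{isp}(H+i)^{-1}e^{−isp} = (p² + a_+ + i)^{-1} and s-lim_{s→−∞} e^{isp}(H+i)^{-1}e^{−isp} = (p² + a_− + i)^{-1}; in particular the two strong limits are different. -/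
/-!
Conjugating by the translation `T s` turns `R - R±` into `R (a± - v(· + s)) R±`, so
`‖T s R (T s)⁻¹ u - R± u‖ ≤ ‖R‖ ‖(a± - v(· + s)) R± u‖₂`, and the right side tends to zero by
dominated convergence, since `v` is bounded and `v(x + s) → a±` pointwise.
The limits differ because `R₊ = R₋` would give `(a₋ - a₊) R₊ R₊ = 0`, hence `R₊ = 0` by
injectivity, which is impossible on the nontrivial space `L²(ℝ)`.
-/

open MeasureTheory Filter Topology
open scoped ENNReal NNReal

theorem tendsto_eLpNorm_zero_of_dominated {α E ι : Type*} [MeasurableSpace α] {μ : Measure α}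
    [NormedAddCommGroup E] {l : Filter ι} [l.IsCountablyGenerated] {p : ℝ≥0∞}
    (hp0 : p ≠ 0) (hp : p ≠ ∞) {F : ι → α → E} {bound : α → ℝ}
    (hF : ∀ i, AEStronglyMeasurable (F i) μ) (hbound : ∀ i, ∀ᵐ x ∂μ, ‖F i x‖ ≤ bound x)
    (hmem : MemLp bound p μ) (hlim : ∀ᵐ x ∂μ, Tendsto (fun i => F i x) l (𝓝 0)) :
    Tendsto (fun i => eLpNorm (F i) p μ) l (𝓝 0) := by
  have hp_pos : 0 < p.toReal := ENNReal.toReal_pos hp0 hp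
  have hint : Tendsto (fun i => ∫⁻ x, ‖F i x‖ₑ ^ p.toReal ∂μ) l (𝓝 0) := by
    simpa [ENNReal.zero_rpow_of_pos hp_pos] using
      tendsto_lintegral_filter_of_dominated_convergence' (fun x => ‖bound x‖ₑ ^ p.toReal)
        (.of_forall fun i => (hF i).enorm.pow_const _)
        (.of_forall fun i => (hbound i).mono fun x hx => by
          gcongr; exact enorm_le_iff_norm_le.2 (hx.trans (Real.le_norm_self _)))
        (lintegral_rpow_enorm_lt_top_of_eLpNorm_lt_top hp0 hp hmem.eLpNorm_lt_top).ne
        (hlim.mono fun x hx => (hx.enorm.ennrpow_const p.toReal))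
  simp_rw [eLpNorm_eq_lintegral_rpow_enorm_toReal hp0 hp]
  have h := hint.ennrpow_const (1 / p.toReal)
  rwa [ENNReal.zero_rpow_of_pos (one_div_pos.2 hp_pos)] at h

theorem MeasureTheory.Lp.nontrivial_of_measure_ne_zero {α E : Type*} [MeasurableSpace α]
    {μ : Measure α} [NormedAddCommGroup E] [Nontrivial E] {p : ℝ≥0∞} (hp : p ≠ 0) {s : Set α}
    (hs : MeasurableSet s) (hμs0 : μ s ≠ 0) (hμs : μ s ≠ ∞) : Nontrivial (Lp E p μ) := by
  obtain ⟨c, hc⟩ := exists_ne (0 : E)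
  refine nontrivial_of_ne (indicatorConstLp p hs hμs c) 0 fun h => ?_
  have hnorm := norm_indicatorConstLp' (hs := hs) (hμs := hμs) (c := c) hp hμs0
  rw [h, norm_zero] at hnorm
  have : 0 < ‖c‖ * μ.real s ^ (1 / p.toReal) := by
    have := ENNReal.toReal_pos hμs0 hμs
    positivity
  exact this.ne' hnorm.symm

section Conjugation
variable {𝕜 E ι : Type*} [NontriviallyNormedField 𝕜] [NormedAddCommGroup E] [NormedSpace 𝕜 E]

theorem tendsto_conj_of_resolvent_identity {l : Filter ι} {T : ι → E ≃ₗᵢ[𝕜] E}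
    {R Ra K : E →L[𝕜] E} (hTRa : ∀ s u, T s (Ra u) = Ra (T s u))
    (hres : R - Ra = R ∘L K ∘L Ra)
    (hK : ∀ g, Tendsto (fun s => T s (K ((T s).symm g))) l (𝓝 0)) (u : E) :
    Tendsto (fun s => T s (R ((T s).symm u))) l (𝓝 (Ra u)) := by
  have hRa : ∀ s, Ra ((T s).symm u) = (T s).symm (Ra u) := fun s => by
    rw [(T s).eq_symm_apply, hTRa, (T s).apply_symm_apply]
  have hdiff : ∀ s, ‖T s (R ((T s).symm u)) - Ra u‖ ≤ ‖R‖ * ‖T s (K ((T s).symm (Ra u)))‖ :=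
    fun s => calc
      ‖T s (R ((T s).symm u)) - Ra u‖ = ‖(R - Ra) ((T s).symm u)‖ := by
        rw [← (T s).apply_symm_apply (Ra u), ← map_sub, (T s).norm_map, ← hRa]
        rfl
      _ = ‖R (K ((T s).symm (Ra u)))‖ := by simp [hres, hRa]
      _ ≤ ‖R‖ * ‖T s (K ((T s).symm (Ra u)))‖ := by
        rw [(T s).norm_map]; exact R.le_opNorm _
  rw [tendsto_iff_norm_sub_tendsto_zero]
  refine squeeze_zero (fun s => norm_nonneg _) hdiff ?_
  simpa using ((hK (Ra u)).norm.const_mul ‖R‖)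

theorem ne_of_sub_eq_smul_comp [Nontrivial E] {A B : E →L[𝕜] E} {c : 𝕜} (hc : c ≠ 0)
    (hA : Function.Injective A) (hAB : A - B = c • (A ∘L B)) : A ≠ B := by
  rintro rfl
  have hAA : ∀ u, A (A u) = 0 := fun u => by
    have h := congrArg (fun C : E →L[𝕜] E => C u) hAB
    simp only [sub_self, zero_apply, smul_apply, ContinuousLinearMap.comp_apply] at h
    exact (smul_eq_zero.1 h.symm).resolve_left hc
  obtain ⟨u, hu⟩ := exists_ne (0 : E)
  have hAu : A u = 0 := hA (by rw [hAA, map_zero])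
  exact hu (hA (by rw [hAu, map_zero]))
end Conjugation

section Translation
variable {G : Type*} [MeasurableSpace G] [AddGroup G] [MeasurableAdd G] {μ : Measure G}
  [μ.IsAddRightInvariant] {p : ℝ≥0∞} [Fact (1 ≤ p)]
  {T : G → Lp ℂ p μ ≃ₗᵢ[ℂ] Lp ℂ p μ} {v : G → ℝ} {Mv : Lp ℂ p μ →L[ℂ] Lp ℂ p μ}

theorem translate_conj_mul_ae_eq (hT : ∀ s f, ⇑(T s f) =ᵐ[μ] fun x => f (x + s))
    (hMv : ∀ f, ⇑(Mv f) =ᵐ[μ] fun x => (v x : ℂ) * f x) (s : G) (f : Lp ℂ p μ) :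
    ⇑(T s (Mv ((T s).symm f))) =ᵐ[μ] fun x => (v (x + s) : ℂ) * f x := by
  set w := (T s).symm f
  have hw : (fun x => w (x + s)) =ᵐ[μ] f := by
    simpa [w] using (hT s w).symm
  have hshift : (fun x => Mv w (x + s)) =ᵐ[μ] fun x => (v (x + s) : ℂ) * w (x + s) :=
    (measurePreserving_add_right μ s).quasiMeasurePreserving.ae_eq_comp (hMv w)
  filter_upwards [hT s (Mv w), hshift, hw] with x h1 h2 h3
  rw [h1, h2, h3]

theorem tendsto_translate_conj_sub_mul (hT : ∀ s f, ⇑(T s f) =ᵐ[μ] fun x => f (x + s))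
    (hMv : ∀ f, ⇑(Mv f) =ᵐ[μ] fun x => (v x : ℂ) * f x) {B : ℝ} (hB : ∀ x, |v x| ≤ B)
    {a : ℝ} {l : Filter G} [l.IsCountablyGenerated] (hl : ∀ y, Tendsto (fun s => y + s) l l)
    (hv : Tendsto v l (𝓝 a)) (hp : p ≠ ∞) (g : Lp ℂ p μ) :
    Tendsto (fun s => T s (((a : ℂ) • 1 - Mv) ((T s).symm g))) l (𝓝 0) := by
  set F : G → G → ℂ := fun s x => ((a : ℂ) - v (x + s)) * g x
  have hF : ∀ s, ⇑(T s (((a : ℂ) • 1 - Mv) ((T s).symm g))) =ᵐ[μ] F s := fun s => by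
    simp only [sub_apply, smul_apply, one_apply_eq_self, map_sub, map_smul,
      LinearIsometryEquiv.apply_symm_apply]
    filter_upwards [Lp.coeFn_sub ((a : ℂ) • g) (T s (Mv ((T s).symm g))),
      Lp.coeFn_smul (a : ℂ) g, translate_conj_mul_ae_eq hT hMv s g] with x h1 h2 h3
    simp only [h1, Pi.sub_apply, h2, Pi.smul_apply, h3, smul_eq_mul, F]
    ring
  have hFbound : ∀ s, ∀ᵐ x ∂μ, ‖F s x‖ ≤ (|a| + B) * ‖g x‖ := fun s => .of_forall fun x => by
    rw [norm_mul, ← Complex.ofReal_sub, Complex.norm_real, Real.norm_eq_abs]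
    gcongr
    exact (abs_sub _ _).trans (by gcongr; exact hB _)
  have hFlim : ∀ x, Tendsto (fun s => F s x) l (𝓝 0) := fun x => by
    have := ((hv.comp (hl x)).ofReal.const_sub (a : ℂ)).mul_const (g x)
    simpa [Function.comp_def] using this
  have hnorm := tendsto_eLpNorm_zero_of_dominated (one_pos.trans_le Fact.out).ne' hp
    (fun s => (Lp.aestronglyMeasurable _).congr (hF s)) hFbound
    ((Lp.memLp g).norm.const_mul _) (.of_forall hFlim)
  rw [tendsto_zero_iff_norm_tendsto_zero]
  simp_rw [Lp.norm_def, eLpNorm_congr_ae (hF _)]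
  simpa only [Function.comp_def, ENNReal.toReal_zero] using
    (ENNReal.tendsto_toReal ENNReal.zero_ne_top).comp hnorm
end Translation

/-- Here `T s = e^{isp}`, `Mv = v(q)`, `R = (H+i)⁻¹`, `Rp = (p²+a₊+i)⁻¹`, `Rm = (p²+a₋+i)⁻¹`. -/
theorem anisotropic_resolvent_translation_limits_general
    (v : ℝ → ℝ) (hbdd : ∃ B : ℝ, ∀ x, |v x| ≤ B)
    (ap am : ℝ) (hvp : Tendsto v atTop (𝓝 ap)) (hvm : Tendsto v atBot (𝓝 am))
    (hne : ap ≠ am)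
    (T : ℝ → (Lp ℂ 2 (volume : Measure ℝ) ≃ₗᵢ[ℂ] Lp ℂ 2 (volume : Measure ℝ)))
    (hT : ∀ (s : ℝ) (f : Lp ℂ 2 (volume : Measure ℝ)),
      ⇑(T s f) =ᵐ[volume] fun x : ℝ => f (x + s))
    (Mv R Rp Rm : Lp ℂ 2 (volume : Measure ℝ) →L[ℂ] Lp ℂ 2 (volume : Measure ℝ))
    (hMv : ∀ f : Lp ℂ 2 (volume : Measure ℝ),
      ⇑(Mv f) =ᵐ[volume] fun x : ℝ => (v x : ℂ) * f x)
    (hTRp : ∀ (s : ℝ) (u : Lp ℂ 2 (volume : Measure ℝ)), T s (Rp u) = Rp (T s u))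
    (hTRm : ∀ (s : ℝ) (u : Lp ℂ 2 (volume : Measure ℝ)), T s (Rm u) = Rm (T s u))
    (hresp : R - Rp = R ∘L ((ap : ℂ) • (1 : Lp ℂ 2 (volume : Measure ℝ) →L[ℂ] Lp ℂ 2 (volume : Measure ℝ)) - Mv) ∘L Rp)
    (hresm : R - Rm = R ∘L ((am : ℂ) • (1 : Lp ℂ 2 (volume : Measure ℝ) →L[ℂ] Lp ℂ 2 (volume : Measure ℝ)) - Mv) ∘L Rm)
    (hRpRm : Rp - Rm = ((am - ap : ℝ) : ℂ) • (Rp ∘L Rm))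
    (hinj : Function.Injective Rp) :
    (∀ u : Lp ℂ 2 (volume : Measure ℝ),
      Tendsto (fun s : ℝ => T s (R ((T s).symm u))) atTop (𝓝 (Rp u))) ∧
    (∀ u : Lp ℂ 2 (volume : Measure ℝ),
      Tendsto (fun s : ℝ => T s (R ((T s).symm u))) atBot (𝓝 (Rm u))) ∧
    Rp ≠ Rm := by
  obtain ⟨B, hB⟩ := hbdd
  have : Nontrivial (Lp ℂ 2 (volume : Measure ℝ)) :=
    Lp.nontrivial_of_measure_ne_zero two_ne_zero measurableSet_Icc
      (by simp [Real.volume_Icc] : volume (Set.Icc (0 : ℝ) 1) ≠ 0) (by simp [Real.volume_Icc])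
  refine ⟨tendsto_conj_of_resolvent_identity hTRp hresp
      (tendsto_translate_conj_sub_mul hT hMv hB
        (fun y => tendsto_atTop_add_const_left _ y tendsto_id) hvp ENNReal.ofNat_ne_top),
    tendsto_conj_of_resolvent_identity hTRm hresm
      (tendsto_translate_conj_sub_mul hT hMv hB
        (fun y => tendsto_atBot_add_const_left _ y tendsto_id) hvm ENNReal.ofNat_ne_top),
    ne_of_sub_eq_smul_comp ?_ hinj hRpRm⟩
  exact_mod_cast sub_ne_zero.2 hne.symm

/-- Let `v : ℝ → ℝ` be bounded Borel with limits `v(x) → a±` as `x → ±∞`,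
`a₊ ≠ a₋`, and `H = p² + v(q)` on `L²(ℝ)`.  We encode: `T s = e^{isp}` (translation),
`Mv` = multiplication by `v`, `R = (H+i)⁻¹`, `R± = (p²+a±+i)⁻¹`, through their
characteristic properties: the norm bound `‖R‖ ≤ 1`, translation invariance of `p²+a±`,
and the resolvent identities `R − R± = R((a± − v)(q))R±` and
`R₊ − R₋ = (a₋ − a₊) R₊R₋` (with `R₊` injective).  Then
`e^{isp}(H+i)⁻¹e^{−isp} → (p²+a₊+i)⁻¹` strongly as `s → +∞`,
`e^{isp}(H+i)⁻¹e^{−isp} → (p²+a₋+i)⁻¹` strongly as `s → −∞`, and the two limits differ. -/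
theorem anisotropic_resolvent_translation_limits
    (v : ℝ → ℝ) (hmeas : Measurable v) (hbdd : ∃ B : ℝ, ∀ x, |v x| ≤ B)
    (ap am : ℝ) (hvp : Tendsto v atTop (𝓝 ap)) (hvm : Tendsto v atBot (𝓝 am))
    (hne : ap ≠ am)
    (T : ℝ → (Lp ℂ 2 (volume : Measure ℝ) ≃ₗᵢ[ℂ] Lp ℂ 2 (volume : Measure ℝ)))
    (hT : ∀ (s : ℝ) (f : Lp ℂ 2 (volume : Measure ℝ)),
      ⇑(T s f) =ᵐ[volume] fun x : ℝ => f (x + s))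
    (Mv R Rp Rm : Lp ℂ 2 (volume : Measure ℝ) →L[ℂ] Lp ℂ 2 (volume : Measure ℝ))
    (hMv : ∀ f : Lp ℂ 2 (volume : Measure ℝ),
      ⇑(Mv f) =ᵐ[volume] fun x : ℝ => (v x : ℂ) * f x)
    (hRnorm : ‖R‖ ≤ 1)
    (hTRp : ∀ (s : ℝ) (u : Lp ℂ 2 (volume : Measure ℝ)), T s (Rp u) = Rp (T s u))
    (hTRm : ∀ (s : ℝ) (u : Lp ℂ 2 (volume : Measure ℝ)), T s (Rm u) = Rm (T s u))
    (hresp : R - Rp = R ∘L ((ap : ℂ) • (1 : Lp ℂ 2 (volume : Measure ℝ) →L[ℂ] Lp ℂ 2 (volume : Measure ℝ)) - Mv) ∘L Rp)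
    (hresm : R - Rm = R ∘L ((am : ℂ) • (1 : Lp ℂ 2 (volume : Measure ℝ) →L[ℂ] Lp ℂ 2 (volume : Measure ℝ)) - Mv) ∘L Rm)
    (hRpRm : Rp - Rm = ((am - ap : ℝ) : ℂ) • (Rp ∘L Rm))
    (hinj : Function.Injective Rp) :
    (∀ u : Lp ℂ 2 (volume : Measure ℝ),
      Tendsto (fun s : ℝ => T s (R ((T s).symm u))) atTop (𝓝 (Rp u))) ∧
    (∀ u : Lp ℂ 2 (volume : Measure ℝ),
      Tendsto (fun s : ℝ => T s (R ((T s).symm u))) atBot (𝓝 (Rm u))) ∧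
    Rp ≠ Rm :=
  anisotropic_resolvent_translation_limits_general v hbdd ap am hvp hvm hne T hT Mv R Rp Rm hMv hTRp
    hTRm hresp hresm hRpRm hinj
end
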